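/- arXiv:2107.09813 — 2 statements merged into one kernel-verified Lean document; each statement's English description precedes it below -/
import Mathlib

section
/- Let μ < ν in T and let φ ∈ t(μ,ν). Then: (1) φ ∈ KP(μ) and t(μ,ν) = [φ]_μ; moreover, if ν is an inner node then deg(μ) ≤ deg(ν). (2) For every nonzero f ∈ K[x], μ(f) = ν(f) holds if and only if φ does not μ-divide f. (3) If μ < ν < ρ in T, then t(μ,ρ) = t(μ,ν); in particular, for all f ∈ K[x], μ(f) = ρ(f) if and only if μ(f) = ν(f). -/
open Polynomial

namespace MLV

variable {K : Type*} [Field K] {Λ : Type*} [AddCommGroup Λ] [LinearOrder Λ] [IsOrderedAddMonoid Λ]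

/-- A valuation on the field `K` with values in `Λ∞ = WithTop Λ`. -/
structure FieldVal (K : Type*) (Λ : Type*) [Field K] [AddCommGroup Λ] [LinearOrder Λ] [IsOrderedAddMonoid Λ] where
  v : K → WithTop Λ
  map_one' : v 1 = 0
  map_zero' : v 0 = ⊤
  ne_top' : ∀ a : K, a ≠ 0 → v a ≠ ⊤
  map_mul' : ∀ a b : K, v (a * b) = v a + v b
  map_add' : ∀ a b : K, min (v a) (v b) ≤ v (a + b)

/-- `μ` is a node of the tree `T = T(Λ)`: a valuation on `K[x]` with values in `Λ∞`
whose restriction to `K` is `v`. -/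
def IsValT (v : FieldVal K Λ) (μ : Polynomial K → WithTop Λ) : Prop :=
  μ 1 = 0 ∧ μ 0 = ⊤ ∧ (∀ f g : Polynomial K, μ (f * g) = μ f + μ g) ∧
    (∀ f g : Polynomial K, min (μ f) (μ g) ≤ μ (f + g)) ∧
    ∀ a : K, μ (C a) = v.v a

/-- `g ∼_μ h` : `μ(g - h) > μ(g)`. -/
def MuEquiv (μ : Polynomial K → WithTop Λ) (g h : Polynomial K) : Prop :=
  μ g < μ (g - h)

/-- `h ∣_μ g` : `g ∼_μ f * h` for some `f`. -/
def MuDvd (μ : Polynomial K → WithTop Λ) (h g : Polynomial K) : Prop :=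
  ∃ f : Polynomial K, MuEquiv μ g (f * h)

/-- `g ∈ K[x] \ K` is `μ`-minimal if it `μ`-divides no nonzero polynomial of smaller degree. -/
def IsMuMinimal (μ : Polynomial K → WithTop Λ) (g : Polynomial K) : Prop :=
  0 < g.natDegree ∧
    ∀ f : Polynomial K, f ≠ 0 → f.degree < g.degree → ¬ MuDvd μ g f

/-- `g` is `μ`-irreducible. -/
def IsMuIrreducible (μ : Polynomial K → WithTop Λ) (g : Polynomial K) : Prop :=
  μ g ≠ ⊤ ∧ (¬ ∃ f : Polynomial K, MuEquiv μ (f * g) 1) ∧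
    ∀ f h : Polynomial K, MuDvd μ g (f * h) → MuDvd μ g f ∨ MuDvd μ g h

/-- A (Maclane-Vaquié) key polynomial for `μ`. -/
def IsKeyPol (μ : Polynomial K → WithTop Λ) (φ : Polynomial K) : Prop :=
  φ.Monic ∧ IsMuMinimal μ φ ∧ IsMuIrreducible μ φ

/-- An inner node: a valuation admitting key polynomials. -/
def IsInnerNode (μ : Polynomial K → WithTop Λ) : Prop :=
  ∃ φ : Polynomial K, IsKeyPol μ φ

/-- `deg(μ)`: the minimal degree of a key polynomial for `μ`. -/
noncomputable def degOf (μ : Polynomial K → WithTop Λ) : ℕ :=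
  sInf {n : ℕ | ∃ φ : Polynomial K, IsKeyPol μ φ ∧ φ.natDegree = n}

/-- A key polynomial of minimal degree. -/
def IsMinKeyPol (μ : Polynomial K → WithTop Λ) (φ : Polynomial K) : Prop :=
  IsKeyPol μ φ ∧ ∀ ψ : Polynomial K, IsKeyPol μ ψ → φ.natDegree ≤ ψ.natDegree

/-- the class `[φ]_μ` of key polynomials `μ`-equivalent to `φ`. -/
def KeyPolClass (μ : Polynomial K → WithTop Λ) (φ : Polynomial K) : Set (Polynomial K) :=
  {ψ : Polynomial K | IsKeyPol μ ψ ∧ MuEquiv μ ψ φ}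

/-- The coefficient `a_s` of the `φ`-expansion `f = Σ_s a_s φ^s` (for `φ` monic nonconstant). -/
noncomputable def expCoeff (φ f : Polynomial K) (s : ℕ) : Polynomial K :=
  (f /ₘ φ ^ s) %ₘ φ

/-- The augmented valuation `[μ; φ, γ]`, acting on `φ`-expansions by
`ν(Σ_s a_s φ^s) = min_s (μ(a_s) + s γ)`. -/
noncomputable def augVal (μ : Polynomial K → WithTop Λ) (φ : Polynomial K)
    (γ : WithTop Λ) (f : Polynomial K) : WithTop Λ :=
  (Finset.range (f.natDegree + 1)).inf'
    (Finset.nonempty_range_iff.mpr (Nat.succ_ne_zero _))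
    fun s => μ (expCoeff φ f s) + s • γ

/-- The depth-zero valuation `ω_{a,δ}`, acting on `(x-a)`-expansions by
`ω(Σ_s a_s (x-a)^s) = min_s (v(a_s) + s δ)`. -/
noncomputable def omegaVal (v : FieldVal K Λ) (a : K) (δ : WithTop Λ)
    (f : Polynomial K) : WithTop Λ :=
  (Finset.range (f.natDegree + 1)).inf'
    (Finset.nonempty_range_iff.mpr (Nat.succ_ne_zero _))
    fun s => v.v ((taylor a f).coeff s) + s • δ

/-- The tangent direction `t(μ,ν)`: monic polynomials of minimal degree with `μ(φ) < ν(φ)`. -/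
def TangentDir (μ ν : Polynomial K → WithTop Λ) : Set (Polynomial K) :=
  {φ : Polynomial K | φ.Monic ∧ μ φ < ν φ ∧
    ∀ ψ : Polynomial K, ψ.Monic → μ ψ < ν ψ → φ.natDegree ≤ ψ.natDegree}

/-- The set of finite values of `μ`. -/
def valSet (μ : Polynomial K → WithTop Λ) : Set Λ :=
  {γ : Λ | ∃ f : Polynomial K, μ f = (γ : WithTop Λ)}

/-- The value group `Γ_μ`. -/
def valGroup (μ : Polynomial K → WithTop Λ) : AddSubgroup Λ :=
  AddSubgroup.closure (valSet μ)

/-- `Γ = v(K^*)` as a subset of `Λ`. -/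
def gammaSet (v : FieldVal K Λ) : Set Λ :=
  {γ : Λ | ∃ a : K, v.v a = (γ : WithTop Λ)}

/-- The value group `Γ` of the base field valuation. -/
def baseGroup (v : FieldVal K Λ) : AddSubgroup Λ :=
  AddSubgroup.closure (gammaSet v)

/-- `μ` is commensurable over `v` : `Γ_μ/Γ` is torsion. -/
def IsCommensurable (v : FieldVal K Λ) (μ : Polynomial K → WithTop Λ) : Prop :=
  ∀ γ : Λ, γ ∈ valGroup μ → ∃ n : ℕ, 0 < n ∧ n • γ ∈ baseGroup v

/-- `Γ_μ^0 = {μ(a) : a ∈ K[x], 0 ≤ deg(a) < deg(μ)}`. -/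
noncomputable def degZeroSet (μ : Polynomial K → WithTop Λ) : Set Λ :=
  {δ : Λ | ∃ a : Polynomial K, a ≠ 0 ∧ a.natDegree < degOf μ ∧ μ a = (δ : WithTop Λ)}

/-- Equivalence of valuations: an order-preserving isomorphism `ι : Γ_μ → Γ_ν`
with `ν = ι ∘ μ`. -/
def ValEquiv (μ ν : Polynomial K → WithTop Λ) : Prop :=
  ∃ ι : valGroup μ ≃+ valGroup ν,
    Monotone ι ∧ (∀ f : Polynomial K, μ f = ⊤ ↔ ν f = ⊤) ∧
    ∀ (f : Polynomial K) (γ : Λ) (h : μ f = (γ : WithTop Λ)),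
      ν f = ((ι ⟨γ, AddSubgroup.subset_closure ⟨f, h⟩⟩ : Λ) : WithTop Λ)

/-- `β ∼_sme γ` : an order-preserving isomorphism `⟨Γ,β⟩ → ⟨Γ,γ⟩` fixing `Γ`
and mapping `β` to `γ`. -/
def SmeEquiv (v : FieldVal K Λ) (β γ : Λ) : Prop :=
  ∃ ι : (AddSubgroup.closure (gammaSet v ∪ {β}) : AddSubgroup Λ) ≃+
      (AddSubgroup.closure (gammaSet v ∪ {γ}) : AddSubgroup Λ),
    Monotone ι ∧
    (∀ (a : Λ) (ha : a ∈ gammaSet v),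
      ((ι ⟨a, AddSubgroup.subset_closure (Set.mem_union_left _ ha)⟩ : Λ) = a)) ∧
    ((ι ⟨β, AddSubgroup.subset_closure (Set.mem_union_right _ rfl)⟩ : Λ) = γ)

section Families

variable {ι : Type*} [LinearOrder ι]

/-- A totally ordered family of inner nodes of `T`, indexed order-isomorphically by a
totally ordered set, containing no maximal element. -/
def IsTOFamily (v : FieldVal K Λ) (ρ : ι → Polynomial K → WithTop Λ) : Prop :=
  (∀ i, IsValT v (ρ i)) ∧ (∀ i, IsInnerNode (ρ i)) ∧ StrictMono ρ ∧
    ∀ i : ι, ∃ j : ι, i < j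

/-- `f` is `A`-stable: the values `ρ_i(f)` are eventually constant. -/
def IsStablePoly (ρ : ι → Polynomial K → WithTop Λ) (f : Polynomial K) : Prop :=
  ∃ i : ι, ∀ j : ι, i ≤ j → ρ j f = ρ i f

/-- `β` is the stable value `ρ_A(f)`. -/
def IsStableVal (ρ : ι → Polynomial K → WithTop Λ) (f : Polynomial K)
    (β : WithTop Λ) : Prop :=
  ∃ i : ι, ∀ j : ι, i ≤ j → ρ j f = β

open Classical in
/-- The stability function `ρ_A` (junk value `⊤` on unstable polynomials). -/
noncomputable def stableVal (ρ : ι → Polynomial K → WithTop Λ) (f : Polynomial K) :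
    WithTop Λ :=
  if h : ∃ β : WithTop Λ, IsStableVal ρ f β then h.choose else ⊤

/-- The family has stable degree `m`. -/
def HasStableDeg (ρ : ι → Polynomial K → WithTop Λ) (m : ℕ) : Prop :=
  ∃ i : ι, ∀ j : ι, i ≤ j → degOf (ρ j) = m

/-- A continuous family: a totally ordered family of eventually constant degree. -/
def IsContFamily (v : FieldVal K Λ) (ρ : ι → Polynomial K → WithTop Λ) : Prop :=
  IsTOFamily v ρ ∧ ∃ m : ℕ, HasStableDeg ρ m

/-- The stable group `Γ_C`: stable values of nonzero stable polynomials. -/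
def stableSet (ρ : ι → Polynomial K → WithTop Λ) : Set Λ :=
  {δ : Λ | ∃ f : Polynomial K, f ≠ 0 ∧ IsStableVal ρ f (δ : WithTop Λ)}

/-- A limit key polynomial: monic, unstable, of minimal degree among unstable polynomials. -/
def IsLimKeyPol (ρ : ι → Polynomial K → WithTop Λ) (φ : Polynomial K) : Prop :=
  φ.Monic ∧ ¬ IsStablePoly ρ φ ∧
    ∀ f : Polynomial K, ¬ IsStablePoly ρ f → φ.natDegree ≤ f.natDegree

/-- An essential continuous family: `m(C) < m_∞(C) < ∞`. -/
def IsEssential (v : FieldVal K Λ) (ρ : ι → Polynomial K → WithTop Λ) : Prop :=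
  IsTOFamily v ρ ∧
    ∃ m : ℕ, HasStableDeg ρ m ∧
      ∃ φ : Polynomial K, IsLimKeyPol ρ φ ∧ m < φ.natDegree

/-- The limit augmentation `[C; φ, γ]`, acting on `φ`-expansions by
`ν(Σ_s a_s φ^s) = min_s (ρ_C(a_s) + s γ)`. -/
noncomputable def limAugVal (ρ : ι → Polynomial K → WithTop Λ) (φ : Polynomial K)
    (γ : WithTop Λ) (f : Polynomial K) : WithTop Λ :=
  (Finset.range (f.natDegree + 1)).inf'
    (Finset.nonempty_range_iff.mpr (Nat.succ_ne_zero _))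
    fun s => stableVal ρ (expCoeff φ f s) + s • γ

/-- Equivalence of totally ordered families: mutual cofinality. -/
def FamEquiv {κ : Type*} [LinearOrder κ] (ρ : ι → Polynomial K → WithTop Λ)
    (σ : κ → Polynomial K → WithTop Λ) : Prop :=
  (∀ i : ι, ∃ j : κ, ρ i ≤ σ j) ∧ ∀ j : κ, ∃ i : ι, σ j ≤ ρ i

end Families

end MLV

/-! Polynomials of degree below `deg φ` take the same value under `μ` and `ν`: a monic one on
which `μ < ν` would contradict the minimality of `deg φ`. Dividing `f` by `φ` then shows that
`μ f < ν f` exactly when `f` is `μ`-equivalent to a multiple of `φ`, which makes `φ` a key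
polynomial whose class is `t(μ,ν)`. If a monic `ν`-minimal `ψ` had smaller degree than `φ`, then
`μ` and `ν` would agree on `ψ`, on `φ /ₘ ψ` and on `φ %ₘ ψ`, and `μ φ < ν φ` would force `ψ` to
`ν`-divide `φ %ₘ ψ`. Hence `deg φ ≤ deg ψ`: this gives `deg μ ≤ deg ν`, and for `ν < ρ` it keeps
`φ` in `t(μ,ρ)`, whence `t(μ,ρ) = [φ]_μ = t(μ,ν)`. -/

namespace MLV

open Polynomial

variable {K : Type*} [Field K] {Λ : Type*} [LinearOrder Λ] {μ : K[X] → WithTop Λ} {φ : K[X]}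

lemma degOf_le (hφ : IsKeyPol μ φ) : degOf μ ≤ φ.natDegree :=
  Nat.sInf_le ⟨φ, hφ, rfl⟩

lemma IsInnerNode.exists_isKeyPol_natDegree_eq (hμ : IsInnerNode μ) :
    ∃ φ : K[X], IsKeyPol μ φ ∧ φ.natDegree = degOf μ := by
  obtain ⟨φ, hφ⟩ := hμ
  exact Nat.sInf_mem (s := {n | ∃ φ : K[X], IsKeyPol μ φ ∧ φ.natDegree = n}) ⟨_, φ, hφ, rfl⟩

variable [AddCommGroup Λ] [IsOrderedAddMonoid Λ] {v : FieldVal K Λ} {ν ρ : K[X] → WithTop Λ}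
  {ψ f g h : K[X]}

namespace IsValT

noncomputable def addValuation (hμ : IsValT v μ) : AddValuation K[X] (WithTop Λ) :=
  AddValuation.of μ hμ.2.1 hμ.1 hμ.2.2.2.1 hμ.2.2.1

lemma map_zero (hμ : IsValT v μ) : μ 0 = ⊤ := hμ.2.1

lemma map_one (hμ : IsValT v μ) : μ 1 = 0 := hμ.1

lemma map_mul (hμ : IsValT v μ) (f g : K[X]) : μ (f * g) = μ f + μ g := hμ.2.2.1 f g

lemma map_C (hμ : IsValT v μ) (a : K) : μ (C a) = v.v a := hμ.2.2.2.2 a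

end IsValT

lemma MuEquiv.val_eq (hμ : IsValT v μ) (he : MuEquiv μ g h) : μ g = μ h :=
  (hμ.addValuation.map_eq_of_lt_sub (he.trans_eq (hμ.addValuation.map_sub_swap g h))).symm

lemma MuEquiv.symm (hμ : IsValT v μ) (he : MuEquiv μ g h) : MuEquiv μ h g := by
  rw [MuEquiv, ← he.val_eq hμ]
  exact he.trans_eq (hμ.addValuation.map_sub_swap g h)

lemma MuEquiv.lt_of_lt (hμ : IsValT v μ) (hν : IsValT v ν) (hle : μ ≤ ν)
    (he : MuEquiv μ g h) (hh : μ h < ν h) : μ g < ν g := by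
  have := hν.addValuation.map_lt_add (he.trans_le (hle _)) ((he.val_eq hμ).trans_lt hh)
  rwa [sub_add_cancel] at this

lemma val_mul_lt_val_mul (hμ : IsValT v μ) (hν : IsValT v ν) (hle : μ ≤ ν)
    (hφ : μ φ < ν φ) (hfφ : μ (f * φ) ≠ ⊤) : μ (f * φ) < ν (f * φ) := by
  have hf : μ f ≠ ⊤ := fun h => hfφ (by rw [hμ.map_mul, h, top_add])
  rw [hμ.map_mul, hν.map_mul]
  calc μ f + μ φ < μ f + ν φ := WithTop.add_lt_add_left hf hφ
    _ ≤ ν f + ν φ := add_le_add_left (hle f) _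

lemma MuDvd.lt (hμ : IsValT v μ) (hν : IsValT v ν) (hle : μ ≤ ν) (hφ : μ φ < ν φ)
    (hd : MuDvd μ φ f) : μ f < ν f :=
  let ⟨_, ha⟩ := hd
  ha.lt_of_lt hμ hν hle <| val_mul_lt_val_mul hμ hν hle hφ <|
    (ha.val_eq hμ).symm.trans_ne (ne_top_of_lt ha)

lemma muEquiv_of_lt_of_lt (hμ : IsValT v μ) (hν : IsValT v ν)
    (hg : μ g < ν g) (hh : μ h < ν h) (hgh : μ (g - h) = ν (g - h)) : MuEquiv μ g h := by
  rw [MuEquiv]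
  by_contra! hc
  have hch : μ (g - h) ≤ μ h := by
    have : min (μ g) (μ (g - h)) ≤ μ (g - (g - h)) := hμ.addValuation.map_sub g (g - h)
    rwa [sub_sub_cancel, min_eq_right hc] at this
  have := calc μ (g - h) ≤ min (μ g) (μ h) := le_min hc hch
    _ < min (ν g) (ν h) := lt_min (min_le_left _ _ |>.trans_lt hg) (min_le_right _ _ |>.trans_lt hh)
    _ ≤ ν (g - h) := hν.addValuation.map_sub g h
  exact this.ne hgh

lemma exists_monic_lt (hμ : IsValT v μ) (hν : IsValT v ν) (h : μ f < ν f) :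
    ∃ ξ : K[X], ξ.Monic ∧ ξ.natDegree = f.natDegree ∧ μ ξ < ν ξ := by
  have hf : f ≠ 0 := by
    rintro rfl
    rw [hμ.map_zero, hν.map_zero] at h
    exact lt_irrefl _ h
  refine ⟨f * C f.leadingCoeff⁻¹, monic_mul_leadingCoeff_inv hf,
    natDegree_mul_leadingCoeff_inv f hf, ?_⟩
  rw [hμ.map_mul, hν.map_mul, hμ.map_C, hν.map_C]
  exact WithTop.add_lt_add_right (v.ne_top' _ (inv_ne_zero (leadingCoeff_ne_zero.mpr hf))) h

namespace TangentDir

lemma nonempty (hμ : IsValT v μ) (hν : IsValT v ν) (hlt : μ < ν) :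
    ∃ φ : K[X], φ ∈ TangentDir μ ν := by
  classical
  obtain ⟨f, hf⟩ := (Pi.lt_def.mp hlt).2
  have hP : ∃ n, ∃ ξ : K[X], ξ.Monic ∧ μ ξ < ν ξ ∧ ξ.natDegree = n :=
    let ⟨ξ, hξ, _, hξlt⟩ := exists_monic_lt hμ hν hf
    ⟨_, ξ, hξ, hξlt, rfl⟩
  obtain ⟨φ, hφ, hφlt, hdeg⟩ := Nat.find_spec hP
  exact ⟨φ, hφ, hφlt, fun ψ hψ hψlt => hdeg ▸ Nat.find_min' hP ⟨ψ, hψ, hψlt, rfl⟩⟩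

lemma natDegree_pos (hμ : IsValT v μ) (hν : IsValT v ν) (hφ : φ ∈ TangentDir μ ν) :
    0 < φ.natDegree := by
  refine hφ.1.natDegree_pos.mpr ?_
  rintro rfl
  exact hφ.2.1.ne (by rw [hμ.map_one, hν.map_one])

lemma eq_of_natDegree_lt (hμ : IsValT v μ) (hν : IsValT v ν) (hle : μ ≤ ν)
    (hφ : φ ∈ TangentDir μ ν) (hf : f.natDegree < φ.natDegree) : μ f = ν f :=
  (hle f).eq_or_lt.resolve_right fun h =>
    let ⟨ξ, hξ, hdeg, hξlt⟩ := exists_monic_lt hμ hν h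
    (hφ.2.2 ξ hξ hξlt).not_gt (hdeg ▸ hf)

lemma muDvd_of_lt (hμ : IsValT v μ) (hν : IsValT v ν) (hle : μ ≤ ν)
    (hφ : φ ∈ TangentDir μ ν) (h : μ f < ν f) : MuDvd μ φ f := by
  set a := f %ₘ φ
  set q := f /ₘ φ
  have hf : a + q * φ = f := by rw [mul_comm]; exact modByMonic_add_div f φ
  have ha : μ a = ν a := eq_of_natDegree_lt hμ hν hle hφ
    (natDegree_modByMonic_lt f hφ.1 (hφ.1.natDegree_pos.mp (natDegree_pos hμ hν hφ)))
  refine ⟨q, ?_⟩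
  rw [MuEquiv, ← eq_sub_of_add_eq hf]
  by_contra! haf
  have hνqφ : ν (q * φ) = μ a := by
    have : ν (f - a) = ν a := hν.addValuation.map_sub_eq_of_lt_right
      (show ν a < ν f from ha ▸ haf.trans_lt h)
    rw [eq_sub_of_add_eq' hf, this, ha]
  have hqφ : μ (q * φ) < μ a :=
    hνqφ ▸ val_mul_lt_val_mul hμ hν hle hφ.2.1
      (ne_top_of_le_ne_top (hνqφ ▸ ne_top_of_lt (haf.trans_lt h)) (hle _))
  have hfqφ : μ f = μ (q * φ) := hf ▸ hμ.addValuation.map_add_eq_of_lt_right hqφ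
  exact (hfqφ ▸ hqφ).not_ge haf

lemma eq_iff_not_muDvd (hμ : IsValT v μ) (hν : IsValT v ν) (hle : μ ≤ ν)
    (hφ : φ ∈ TangentDir μ ν) (f : K[X]) : μ f = ν f ↔ ¬ MuDvd μ φ f :=
  ⟨fun h hd => (MuDvd.lt hμ hν hle hφ.2.1 hd).ne h,
    fun h => (hle f).eq_or_lt.resolve_right fun hlt => h (muDvd_of_lt hμ hν hle hφ hlt)⟩

lemma isKeyPol (hμ : IsValT v μ) (hν : IsValT v ν) (hle : μ ≤ ν)
    (hφ : φ ∈ TangentDir μ ν) : IsKeyPol μ φ := by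
  have hlt_of_dvd {f : K[X]} : MuDvd μ φ f → μ f < ν f := MuDvd.lt hμ hν hle hφ.2.1
  refine ⟨hφ.1, ⟨natDegree_pos hμ hν hφ, ?_⟩, ne_top_of_lt hφ.2.1, ?_, ?_⟩
  · exact fun f hf hdeg hd =>
      (hlt_of_dvd hd).ne (eq_of_natDegree_lt hμ hν hle hφ (natDegree_lt_natDegree hf hdeg))
  · rintro ⟨f, hf⟩
    exact (hlt_of_dvd ⟨f, hf.symm hμ⟩).ne (by rw [hμ.map_one, hν.map_one])
  · intro f g hd
    by_contra! hfg
    rw [← eq_iff_not_muDvd hμ hν hle hφ, ← eq_iff_not_muDvd hμ hν hle hφ] at hfg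
    exact (hlt_of_dvd hd).ne (by rw [hμ.map_mul, hν.map_mul, hfg.1, hfg.2])

lemma eq_keyPolClass (hμ : IsValT v μ) (hν : IsValT v ν) (hle : μ ≤ ν)
    (hφ : φ ∈ TangentDir μ ν) : TangentDir μ ν = KeyPolClass μ φ := by
  ext ψ
  refine ⟨fun hψ => ⟨isKeyPol hμ hν hle hψ, ?_⟩, fun ⟨hψ, he⟩ => ⟨hψ.1, ?_, ?_⟩⟩
  · have hdeg : ψ.natDegree = φ.natDegree :=
      (hψ.2.2 φ hφ.1 hφ.2.1).antisymm (hφ.2.2 ψ hψ.1 hψ.2.1)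
    refine muEquiv_of_lt_of_lt hμ hν hψ.2.1 hφ.2.1 (eq_of_natDegree_lt hμ hν hle hφ ?_)
    exact IsMonicOfDegree.natDegree_sub_lt (natDegree_pos hμ hν hφ).ne' ⟨hdeg, hψ.1⟩ ⟨rfl, hφ.1⟩
  · exact he.lt_of_lt hμ hν hle hφ.2.1
  · intro χ hχ hχlt
    refine le_trans ?_ (hφ.2.2 χ hχ hχlt)
    by_contra! hdeg
    exact hψ.2.1.2 φ hφ.1.ne_zero (degree_lt_degree hdeg) ⟨1, (one_mul ψ).symm ▸ he.symm hμ⟩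

lemma natDegree_le_of_isMuMinimal (hμ : IsValT v μ) (hν : IsValT v ν) (hle : μ ≤ ν)
    (hφ : φ ∈ TangentDir μ ν) (hψ : ψ.Monic) (hmin : IsMuMinimal ν ψ) :
    φ.natDegree ≤ ψ.natDegree := by
  by_contra! hdeg
  have hμν {f : K[X]} : f.natDegree < φ.natDegree → μ f = ν f := eq_of_natDegree_lt hμ hν hle hφ
  set r := φ %ₘ ψ
  set q := φ /ₘ ψ
  have hφrq : r + q * ψ = φ := by rw [mul_comm]; exact modByMonic_add_div φ ψ
  have hr : μ r = ν r :=
    hμν ((natDegree_modByMonic_lt φ hψ (hψ.natDegree_pos.mp hmin.1)).trans hdeg)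
  have hqψ : μ (q * ψ) = ν (q * ψ) := by
    rw [hμ.map_mul, hν.map_mul, hμν hdeg,
      hμν ((natDegree_divByMonic φ hψ).trans_lt (Nat.sub_lt (natDegree_pos hμ hν hφ) hmin.1))]
  have hlow : min (ν r) (ν (q * ψ)) < ν φ :=
    calc min (ν r) (ν (q * ψ)) = min (μ r) (μ (q * ψ)) := by rw [hr, hqψ]
      _ ≤ μ φ := hφrq ▸ hμ.addValuation.map_add r (q * ψ)
      _ < ν φ := hφ.2.1
  -- the ultrametric inequality is strict only between summands of equal value
  have hsame : ν r = ν (q * ψ) := by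
    by_contra hne
    have : ν (r + q * ψ) = min (ν r) (ν (q * ψ)) := hν.addValuation.map_add_of_distinct_val hne
    exact hlow.ne (hφrq ▸ this).symm
  have hrφ : ν r < ν φ := by rwa [← hsame, min_self] at hlow
  have hr0 : r ≠ 0 := fun h0 => (ne_top_of_lt hrφ) (h0 ▸ hν.map_zero)
  refine hmin.2 r hr0 (degree_modByMonic_lt φ hψ) ⟨-q, ?_⟩
  rwa [MuEquiv, neg_mul, sub_neg_eq_add, hφrq]

lemma degOf_le_degOf (hμ : IsValT v μ) (hν : IsValT v ν) (hle : μ ≤ ν)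
    (hφ : φ ∈ TangentDir μ ν) (hinner : IsInnerNode ν) : degOf μ ≤ degOf ν := by
  obtain ⟨ψ, hψ, hdeg⟩ := hinner.exists_isKeyPol_natDegree_eq
  calc degOf μ ≤ φ.natDegree := degOf_le (isKeyPol hμ hν hle hφ)
    _ ≤ ψ.natDegree := natDegree_le_of_isMuMinimal hμ hν hle hφ hψ.1 hψ.2.1
    _ = degOf ν := hdeg

lemma mem_of_lt (hμ : IsValT v μ) (hν : IsValT v ν) (hle : μ ≤ ν)
    (hφ : φ ∈ TangentDir μ ν) (hρ : IsValT v ρ) (hνρ : ν < ρ) : φ ∈ TangentDir μ ρ := by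
  refine ⟨hφ.1, hφ.2.1.trans_le (hνρ.le φ), fun ξ hξ hξlt => ?_⟩
  rcases (hle ξ).eq_or_lt with heq | hlt
  · obtain ⟨φ', hφ'⟩ := nonempty hν hρ hνρ
    calc φ.natDegree ≤ φ'.natDegree :=
          natDegree_le_of_isMuMinimal hμ hν hle hφ hφ'.1 (isKeyPol hν hρ hνρ.le hφ').2.1
      _ ≤ ξ.natDegree := hφ'.2.2 ξ hξ (heq ▸ hξlt)
  · exact hφ.2.2 ξ hξ hlt

end TangentDir

end MLV

open MLV in
/-- Properties of the tangent direction `t(μ,ν)` for `μ < ν` in `T`. -/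
theorem statement_2 {K : Type*} [Field K] {Λ : Type*} [AddCommGroup Λ] [LinearOrder Λ] [IsOrderedAddMonoid Λ]
    (v : FieldVal K Λ) (μ ν : Polynomial K → WithTop Λ)
    (hμ : IsValT v μ) (hν : IsValT v ν) (hlt : μ < ν)
    (φ : Polynomial K) (hφ : φ ∈ TangentDir μ ν) :
    (IsKeyPol μ φ ∧ TangentDir μ ν = KeyPolClass μ φ ∧
      (IsInnerNode ν → degOf μ ≤ degOf ν)) ∧
    (∀ f : Polynomial K, f ≠ 0 → (μ f = ν f ↔ ¬ MuDvd μ φ f)) ∧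
    (∀ ρ : Polynomial K → WithTop Λ, IsValT v ρ → ν < ρ →
      TangentDir μ ρ = TangentDir μ ν ∧
        ∀ f : Polynomial K, (μ f = ρ f ↔ μ f = ν f)) := by
  have hle : μ ≤ ν := hlt.le
  refine ⟨⟨TangentDir.isKeyPol hμ hν hle hφ, TangentDir.eq_keyPolClass hμ hν hle hφ,
    TangentDir.degOf_le_degOf hμ hν hle hφ⟩,
    fun f _ => TangentDir.eq_iff_not_muDvd hμ hν hle hφ f, fun ρ hρ hνρ => ?_⟩
  have hμρ : μ ≤ ρ := hle.trans hνρ.le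
  have hφρ : φ ∈ TangentDir μ ρ := TangentDir.mem_of_lt hμ hν hle hφ hρ hνρ
  refine ⟨(TangentDir.eq_keyPolClass hμ hρ hμρ hφρ).trans
    (TangentDir.eq_keyPolClass hμ hν hle hφ).symm, fun f => ?_⟩
  rw [TangentDir.eq_iff_not_muDvd hμ hρ hμρ hφρ, TangentDir.eq_iff_not_muDvd hμ hν hle hφ]
end

section
/- Let μ be an inner node of T, let φ, φ* ∈ KP(μ), and let γ, γ* ∈ Λ∪{∞} with γ > μ(φ) and γ* > μ(φ*). Then [μ; φ, γ] = [μ; φ*, γ*] if and only if γ = γ* and μ(φ* − φ) ≥ γ. In this case, φ ∼_μ φ*. -/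
open Polynomial

open MLV

/-!
Both augmentations take the value `γ` (resp. `γ*`) on their own key polynomial and agree with
`μ` on polynomials of smaller degree, so their equality forces `deg φ = deg φ*`. Then
`a = φ* - φ` has degree `< deg φ`, and evaluating at `φ* = φ + a` and at `φ = φ* - a` gives
`min (μ a) γ = γ*` and `min (μ a) γ* = γ`, i.e. `γ = γ*` and `γ ≤ μ a`.

Conversely, `μ`-minimality of `φ` gives `μ ≤ [μ; φ, γ]`, so expanding `φ*^s = (φ + a)^s`
binomially yields `[μ; φ, γ] (b φ*^s) ≥ μ b + s γ` when `γ ≤ μ a`. Applied to the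
`φ*`-expansion of any `f` this gives `[μ; φ*, γ] ≤ [μ; φ, γ]`, and the symmetric argument gives
equality. Finally `φ ∼_μ φ*` reads `μ φ < γ ≤ μ (φ* - φ)`.
-/
namespace Polynomial

variable {R : Type*} [CommRing R] {p q : R[X]}

theorem Monic.degree_zero_lt [Nontrivial R] (hq : q.Monic) : (0 : R[X]).degree < q.degree := by
  simpa [bot_lt_iff_ne_bot] using hq.ne_zero

theorem divByMonic_mul (hp : p.Monic) (hq : q.Monic) (f : R[X]) :
    f /ₘ (p * q) = (f /ₘ p) /ₘ q := by
  nontriviality R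
  refine (div_modByMonic_unique _ ((f /ₘ p) %ₘ q * p + f %ₘ p) (hp.mul hq) ⟨?_, ?_⟩).1
  · linear_combination (modByMonic_add_div f p) + p * modByMonic_add_div (f /ₘ p) q
  · rw [mul_comm p q, hp.degree_mul]
    refine (degree_add_le _ _).trans_lt (max_lt ?_ ?_)
    · rw [hp.degree_mul]
      exact WithBot.add_lt_add_right (degree_ne_bot.mpr hp.ne_zero) (degree_modByMonic_lt _ hq)
    · exact (degree_modByMonic_lt f hp).trans_le
        (le_add_of_nonneg_left (zero_le_degree_iff.mpr hq.ne_zero))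

theorem add_divByMonic (hq : q.Monic) (f g : R[X]) : (f + g) /ₘ q = f /ₘ q + g /ₘ q := by
  nontriviality R
  refine (div_modByMonic_unique _ (f %ₘ q + g %ₘ q) hq ⟨?_, ?_⟩).1
  · linear_combination modByMonic_add_div f q + modByMonic_add_div g q
  · exact (degree_add_le _ _).trans_lt
      (max_lt (degree_modByMonic_lt _ hq) (degree_modByMonic_lt _ hq))

theorem mul_add_divByMonic (hq : q.Monic) (g : R[X]) {r : R[X]} (hr : r.degree < q.degree) :
    (g * q + r) /ₘ q = g :=
  (div_modByMonic_unique g r hq ⟨by ring, hr⟩).1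

theorem mul_add_modByMonic (hq : q.Monic) (g : R[X]) {r : R[X]} (hr : r.degree < q.degree) :
    (g * q + r) %ₘ q = r :=
  (div_modByMonic_unique g r hq ⟨by ring, hr⟩).2

end Polynomial

theorem AddValuation.map_natCast_nonneg {R Γ₀ : Type*} [Ring R]
    [LinearOrderedAddCommMonoidWithTop Γ₀] (w : AddValuation R Γ₀) (n : ℕ) : 0 ≤ w n := by
  induction n with
  | zero => simp
  | succ n ih => rw [Nat.cast_succ]; exact w.map_le_add ih w.map_one.ge

namespace MLV

variable {K : Type*} [Field K] {Λ : Type*} [AddCommGroup Λ] [LinearOrder Λ] [IsOrderedAddMonoid Λ]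

noncomputable def IsValT.toAddValuation {v : FieldVal K Λ} {μ : K[X] → WithTop Λ}
    (hμ : IsValT v μ) : AddValuation K[X] (WithTop Λ) :=
  AddValuation.of μ hμ.2.1 hμ.1 hμ.2.2.2.1 hμ.2.2.1

section ExpCoeff

variable {φ : K[X]}

@[simp]
theorem expCoeff_zero (s : ℕ) : expCoeff φ 0 s = 0 := by
  simp [expCoeff]

theorem expCoeff_zero_eq_modByMonic (f : K[X]) : expCoeff φ f 0 = f %ₘ φ := by
  simp [expCoeff]

theorem expCoeff_succ (hφ : φ.Monic) (f : K[X]) (s : ℕ) :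
    expCoeff φ f (s + 1) = expCoeff φ (f /ₘ φ) s := by
  rw [expCoeff, expCoeff, pow_succ', divByMonic_mul hφ (hφ.pow s)]

theorem expCoeff_mul_add_zero (hφ : φ.Monic) (g : K[X]) {r : K[X]} (hr : r.degree < φ.degree) :
    expCoeff φ (g * φ + r) 0 = r := by
  rw [expCoeff_zero_eq_modByMonic, mul_add_modByMonic hφ g hr]

theorem expCoeff_mul_add_succ (hφ : φ.Monic) (g : K[X]) {r : K[X]} (hr : r.degree < φ.degree)
    (s : ℕ) : expCoeff φ (g * φ + r) (s + 1) = expCoeff φ g s := by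
  rw [expCoeff_succ hφ, mul_add_divByMonic hφ g hr]

theorem expCoeff_of_degree_lt (hφ : φ.Monic) {r : K[X]} (hr : r.degree < φ.degree) (s : ℕ) :
    expCoeff φ r s = if s = 0 then r else 0 := by
  cases s with
  | zero => simpa using expCoeff_mul_add_zero hφ 0 hr
  | succ s => simpa using expCoeff_mul_add_succ hφ 0 hr s

theorem expCoeff_add (hφ : φ.Monic) (f g : K[X]) (s : ℕ) :
    expCoeff φ (f + g) s = expCoeff φ f s + expCoeff φ g s := by
  induction s generalizing f g with
  | zero => simp only [expCoeff_zero_eq_modByMonic, add_modByMonic]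
  | succ s ih => simp only [expCoeff_succ hφ, add_divByMonic hφ, ih]

theorem expCoeff_mul_pow_add (hφ : φ.Monic) (c : K[X]) (k s : ℕ) :
    expCoeff φ (c * φ ^ k) (k + s) = expCoeff φ c s := by
  induction k with
  | zero => simp
  | succ k ih =>
    rw [pow_succ, ← mul_assoc, ← add_zero (c * φ ^ k * φ), add_right_comm,
      expCoeff_mul_add_succ hφ _ hφ.degree_zero_lt, ih]

theorem expCoeff_mul_pow_of_lt (hφ : φ.Monic) (c : K[X]) {k s : ℕ} (h : s < k) :
    expCoeff φ (c * φ ^ k) s = 0 := by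
  induction k generalizing s with
  | zero => exact absurd h s.not_lt_zero
  | succ k ih =>
    rw [pow_succ, ← mul_assoc, ← add_zero (c * φ ^ k * φ)]
    cases s with
    | zero => exact expCoeff_mul_add_zero hφ _ hφ.degree_zero_lt
    | succ s => rw [expCoeff_mul_add_succ hφ _ hφ.degree_zero_lt, ih (by omega)]

theorem expCoeff_eq_zero_of_natDegree_lt (hφ : φ.Monic) (hφ₀ : 0 < φ.natDegree) {f : K[X]}
    {s : ℕ} (h : f.natDegree < s) : expCoeff φ f s = 0 := by
  rw [expCoeff, (divByMonic_eq_zero_iff (hφ.pow s)).mpr, zero_modByMonic]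
  refine degree_le_natDegree.trans_lt ?_
  rw [degree_eq_natDegree (hφ.pow s).ne_zero, hφ.natDegree_pow]
  exact_mod_cast h.trans_le (Nat.le_mul_of_pos_right s hφ₀)

theorem sum_expCoeff_mul_pow (hφ : φ.Monic) (hφ₀ : 0 < φ.natDegree) {f : K[X]} {N : ℕ}
    (hN : f.natDegree ≤ N) : ∑ s ∈ Finset.range (N + 1), expCoeff φ f s * φ ^ s = f := by
  induction N generalizing f with
  | zero =>
    simpa [expCoeff_zero_eq_modByMonic, modByMonic_eq_self_iff hφ] using
      degree_lt_degree (hN.trans_lt hφ₀)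
  | succ N ih =>
    have hq : (f /ₘ φ).natDegree ≤ N := by rw [natDegree_divByMonic f hφ]; omega
    rw [Finset.sum_range_succ', expCoeff_zero_eq_modByMonic, pow_zero, mul_one]
    simp_rw [expCoeff_succ hφ, pow_succ, ← mul_assoc, ← Finset.sum_mul, ih hq]
    rw [mul_comm, add_comm, modByMonic_add_div]

end ExpCoeff

variable {w : AddValuation K[X] (WithTop Λ)} {φ : K[X]} {γ : WithTop Λ}

theorem le_augVal_iff (hφ : φ.Monic) (hφ₀ : 0 < φ.natDegree) {b : WithTop Λ} {f : K[X]} :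
    b ≤ augVal w φ γ f ↔ ∀ s, b ≤ w (expCoeff φ f s) + s • γ := by
  refine ⟨fun h s => ?_, fun h => Finset.le_inf' _ _ fun s _ => h s⟩
  rcases lt_or_ge f.natDegree s with hs | hs
  · simp [expCoeff_eq_zero_of_natDegree_lt hφ hφ₀ hs]
  · exact h.trans (Finset.inf'_le _ (Finset.mem_range_succ_iff.mpr hs))

theorem augVal_le (hφ : φ.Monic) (hφ₀ : 0 < φ.natDegree) (f : K[X]) (s : ℕ) :
    augVal w φ γ f ≤ w (expCoeff φ f s) + s • γ :=
  (le_augVal_iff hφ hφ₀).mp le_rfl s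

theorem augVal_of_degree_lt (hφ : φ.Monic) (hφ₀ : 0 < φ.natDegree) {f : K[X]}
    (hf : f.degree < φ.degree) : augVal w φ γ f = w f := by
  refine le_antisymm ?_ ((le_augVal_iff hφ hφ₀).mpr fun s => ?_)
  · simpa [expCoeff_of_degree_lt hφ hf] using augVal_le (w := w) (γ := γ) hφ hφ₀ f 0
  · cases s <;> simp [expCoeff_of_degree_lt hφ hf]

theorem augVal_self_add (hφ : φ.Monic) (hφ₀ : 0 < φ.natDegree) {a : K[X]}
    (ha : a.degree < φ.degree) : augVal w φ γ (φ + a) = min (w a) γ := by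
  have h1 : (1 : K[X]).degree < φ.degree := by
    rw [degree_one, degree_eq_natDegree hφ.ne_zero]; exact_mod_cast hφ₀
  have e : φ + a = 1 * φ + a := by ring
  have c0 : expCoeff φ (φ + a) 0 = a := by rw [e, expCoeff_mul_add_zero hφ 1 ha]
  have c1 : expCoeff φ (φ + a) 1 = 1 := by
    rw [e, expCoeff_mul_add_succ hφ 1 ha, expCoeff_of_degree_lt hφ h1, if_pos rfl]
  have c2 : ∀ s, expCoeff φ (φ + a) (s + 2) = 0 := fun s => by
    rw [e, expCoeff_mul_add_succ hφ 1 ha, expCoeff_of_degree_lt hφ h1, if_neg s.succ_ne_zero]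
  refine le_antisymm (le_min ?_ ?_) ((le_augVal_iff hφ hφ₀).mpr fun s => ?_)
  · simpa [c0] using augVal_le (w := w) (γ := γ) hφ hφ₀ (φ + a) 0
  · simpa [c1] using augVal_le (w := w) (γ := γ) hφ hφ₀ (φ + a) 1
  · match s with
    | 0 => simp [c0]
    | 1 => simp [c1]
    | s + 2 => simp [c2]

theorem augVal_self (hφ : φ.Monic) (hφ₀ : 0 < φ.natDegree) : augVal w φ γ φ = γ := by
  simpa using augVal_self_add (w := w) (γ := γ) hφ hφ₀ hφ.degree_zero_lt

theorem min_le_augVal_add (hφ : φ.Monic) (hφ₀ : 0 < φ.natDegree) (f g : K[X]) :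
    min (augVal w φ γ f) (augVal w φ γ g) ≤ augVal w φ γ (f + g) := by
  refine (le_augVal_iff hφ hφ₀).mpr fun s => ?_
  calc min (augVal w φ γ f) (augVal w φ γ g)
      ≤ min (w (expCoeff φ f s) + s • γ) (w (expCoeff φ g s) + s • γ) :=
        min_le_min (augVal_le hφ hφ₀ f s) (augVal_le hφ hφ₀ g s)
    _ = min (w (expCoeff φ f s)) (w (expCoeff φ g s)) + s • γ := min_add_add_right _ _ _
    _ ≤ w (expCoeff φ (f + g) s) + s • γ := by
        rw [expCoeff_add hφ]; exact add_le_add_left (w.map_add _ _) _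

theorem le_augVal_sum (hφ : φ.Monic) (hφ₀ : 0 < φ.natDegree) {ι : Type*} (S : Finset ι)
    (g : ι → K[X]) {b : WithTop Λ} (h : ∀ i ∈ S, b ≤ augVal w φ γ (g i)) :
    b ≤ augVal w φ γ (∑ i ∈ S, g i) := by
  induction S using Finset.cons_induction with
  | empty => simp [(le_augVal_iff hφ hφ₀).mpr]
  | cons i S hi ih =>
    rw [Finset.sum_cons]
    exact (le_min (h i (S.mem_cons_self i)) (ih fun j hj => h j (Finset.mem_cons_of_mem hj))).trans
      (min_le_augVal_add hφ hφ₀ _ _)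

theorem le_augVal_mul_pow (hφ : φ.Monic) (hφ₀ : 0 < φ.natDegree) (c : K[X]) (k : ℕ) :
    augVal w φ γ c + k • γ ≤ augVal w φ γ (c * φ ^ k) := by
  refine (le_augVal_iff hφ hφ₀).mpr fun s => ?_
  rcases lt_or_ge s k with hs | hs
  · simp [expCoeff_mul_pow_of_lt hφ c hs]
  · obtain ⟨t, rfl⟩ := Nat.exists_eq_add_of_le hs
    rw [expCoeff_mul_pow_add hφ, add_nsmul, add_comm (k • γ), ← add_assoc]
    gcongr
    exact augVal_le hφ hφ₀ c t

theorem IsMuMinimal.map_mul_add (hmin : IsMuMinimal w φ) (q : K[X]) {r : K[X]}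
    (hr : r.degree < φ.degree) : w (q * φ + r) = min (w (q * φ)) (w r) := by
  rcases ne_or_eq (w (q * φ)) (w r) with hne | heq
  · exact w.map_add_of_distinct_val hne
  refine le_antisymm ?_ (w.map_add _ _)
  rw [heq, min_self]
  by_contra! hlt
  -- then `r ∼_μ -q φ`, so `φ` would `μ`-divide `r`, which has smaller degree
  have hr₀ : r ≠ 0 := by rintro rfl; simp at hlt
  refine hmin.2 r hr₀ hr ⟨-q, ?_⟩
  simpa [MuEquiv, add_comm] using hlt

theorem IsMuMinimal.map_le_map_expCoeff_add (hφ : φ.Monic) (hmin : IsMuMinimal w φ) (s : ℕ)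
    (f : K[X]) : w f ≤ w (expCoeff φ f s) + s • w φ := by
  have hdiv : ∀ g : K[X], w g = min (w (g /ₘ φ * φ)) (w (g %ₘ φ)) := fun g => by
    conv_lhs => rw [← modByMonic_add_div g φ, add_comm, mul_comm]
    exact hmin.map_mul_add _ (degree_modByMonic_lt g hφ)
  induction s generalizing f with
  | zero => simp [expCoeff_zero_eq_modByMonic, hdiv f]
  | succ s ih =>
    calc w f ≤ w (f /ₘ φ * φ) := (hdiv f).symm ▸ min_le_left _ _
      _ = w (f /ₘ φ) + w φ := w.map_mul _ _
      _ ≤ w (expCoeff φ (f /ₘ φ) s) + s • w φ + w φ := by gcongr; exact ih _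
      _ = w (expCoeff φ f (s + 1)) + (s + 1) • w φ := by
        rw [expCoeff_succ hφ, succ_nsmul, add_assoc]

theorem IsMuMinimal.map_le_augVal (hφ : φ.Monic) (hmin : IsMuMinimal w φ) (hγ : w φ ≤ γ)
    (f : K[X]) : w f ≤ augVal w φ γ f := by
  refine (le_augVal_iff hφ hmin.1).mpr fun s => ?_
  calc w f ≤ w (expCoeff φ f s) + s • w φ := hmin.map_le_map_expCoeff_add hφ s f
    _ ≤ w (expCoeff φ f s) + s • γ := by gcongr

theorem IsMuMinimal.le_augVal_mul_pow_of_le_map_sub (hφ : φ.Monic) (hmin : IsMuMinimal w φ)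
    (hγ : w φ ≤ γ) {ψ : K[X]} (h : γ ≤ w (ψ - φ)) (b : K[X]) (s : ℕ) :
    w b + s • γ ≤ augVal w φ γ (b * ψ ^ s) := by
  rw [← add_sub_cancel φ ψ, add_pow, Finset.mul_sum]
  refine le_augVal_sum hφ hmin.1 _ _ fun k hk => ?_
  have hks : k ≤ s := Finset.mem_range_succ_iff.mp hk
  set c := b * (ψ - φ) ^ (s - k) * (s.choose k : K[X])
  have hc : w b + (s - k) • γ ≤ w c := by
    calc w b + (s - k) • γ ≤ w b + (s - k) • w (ψ - φ) := by gcongr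
      _ ≤ w b + (s - k) • w (ψ - φ) + w (s.choose k : K[X]) :=
          le_add_of_nonneg_right (w.map_natCast_nonneg _)
      _ = w c := by simp only [c, w.map_mul, w.map_pow]
  calc w b + s • γ = w b + (s - k) • γ + k • γ := by
        rw [add_assoc, ← add_nsmul, Nat.sub_add_cancel hks]
    _ ≤ augVal w φ γ c + k • γ := by gcongr; exact hc.trans (hmin.map_le_augVal hφ hγ c)
    _ ≤ augVal w φ γ (c * φ ^ k) := le_augVal_mul_pow hφ hmin.1 c k
    _ = augVal w φ γ (b * (φ ^ k * (ψ - φ) ^ (s - k) * (s.choose k : K[X]))) := by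
          congr 1; ring

theorem IsMuMinimal.augVal_le_augVal (hφ : φ.Monic) (hmin : IsMuMinimal w φ) (hγ : w φ ≤ γ)
    {ψ : K[X]} (hψ : ψ.Monic) (hψ₀ : 0 < ψ.natDegree) (h : γ ≤ w (ψ - φ)) (f : K[X]) :
    augVal w ψ γ f ≤ augVal w φ γ f := by
  conv_rhs => rw [← sum_expCoeff_mul_pow hψ hψ₀ (le_refl f.natDegree)]
  refine le_augVal_sum hφ hmin.1 _ _ fun s _ => ?_
  exact (augVal_le hψ hψ₀ f s).trans (hmin.le_augVal_mul_pow_of_le_map_sub hφ hγ h _ s)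

theorem natDegree_le_of_augVal_eq (hφ : φ.Monic) (hφ₀ : 0 < φ.natDegree) {ψ : K[X]}
    (hψ : ψ.Monic) (hψ₀ : 0 < ψ.natDegree) {δ : WithTop Λ} (hγ : w φ < γ)
    (h : augVal w φ γ = augVal w ψ δ) : ψ.natDegree ≤ φ.natDegree := by
  by_contra! hlt
  have hφφ := congrFun h φ
  rw [augVal_self hφ hφ₀, augVal_of_degree_lt hψ hψ₀ (degree_lt_degree hlt)] at hφφ
  exact hγ.ne' hφφ

theorem eq_and_le_map_sub_of_augVal_eq (hφ : φ.Monic) (hφ₀ : 0 < φ.natDegree) {ψ : K[X]}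
    (hψ : ψ.Monic) (hψ₀ : 0 < ψ.natDegree) {δ : WithTop Λ} (hγ : w φ < γ)
    (hδ : w ψ < δ) (h : augVal w φ γ = augVal w ψ δ) : γ = δ ∧ γ ≤ w (ψ - φ) := by
  have hdeg : ψ.degree = φ.degree := by
    rw [degree_eq_natDegree hφ.ne_zero, degree_eq_natDegree hψ.ne_zero,
      le_antisymm (natDegree_le_of_augVal_eq hφ hφ₀ hψ hψ₀ hγ h)
        (natDegree_le_of_augVal_eq hψ hψ₀ hφ hφ₀ hδ h.symm)]
  have hsub : (ψ - φ).degree < φ.degree :=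
    degree_sub_lt_right hdeg hφ.ne_zero (by rw [hφ.leadingCoeff, hψ.leadingCoeff])
  have hsub' : (φ - ψ).degree < ψ.degree := by rwa [← degree_neg, neg_sub, hdeg]
  have hψφ : min (w (ψ - φ)) γ = δ := by
    rw [← augVal_self_add hφ hφ₀ hsub, add_sub_cancel, h, augVal_self hψ hψ₀]
  have hφψ : min (w (ψ - φ)) δ = γ := by
    rw [w.map_sub_swap, ← augVal_self_add hψ hψ₀ hsub', add_sub_cancel, ← h,
      augVal_self hφ hφ₀]
  have hγδ : γ = δ := le_antisymm (hφψ ▸ min_le_right _ _) (hψφ ▸ min_le_right _ _)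
  exact ⟨hγδ, min_eq_right_iff.mp (hψφ.trans hγδ.symm)⟩

theorem augVal_eq_augVal_iff (hφ : φ.Monic) (hφmin : IsMuMinimal w φ) {ψ : K[X]}
    (hψ : ψ.Monic) (hψmin : IsMuMinimal w ψ) {δ : WithTop Λ} (hγ : w φ < γ)
    (hδ : w ψ < δ) :
    augVal w φ γ = augVal w ψ δ ↔ γ = δ ∧ γ ≤ w (ψ - φ) := by
  refine ⟨eq_and_le_map_sub_of_augVal_eq hφ hφmin.1 hψ hψmin.1 hγ hδ, ?_⟩
  rintro ⟨rfl, h⟩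
  refine funext fun f => le_antisymm ?_ (hφmin.augVal_le_augVal hφ hγ.le hψ hψmin.1 h f)
  exact hψmin.augVal_le_augVal hψ hδ.le hφ hφmin.1 (by rwa [w.map_sub_swap]) f

end MLV

theorem statement_4_general {K : Type*} [Field K] {Λ : Type*} [AddCommGroup Λ] [LinearOrder Λ] [IsOrderedAddMonoid Λ]
    (v : FieldVal K Λ) (μ : Polynomial K → WithTop Λ) (hμ : IsValT v μ)
    (φ φ' : Polynomial K) (hφ : IsKeyPol μ φ) (hφ' : IsKeyPol μ φ')
    (γ γ' : WithTop Λ) (hγ : μ φ < γ) (hγ' : μ φ' < γ') :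
    (augVal μ φ γ = augVal μ φ' γ' ↔ γ = γ' ∧ γ ≤ μ (φ' - φ)) ∧
    (augVal μ φ γ = augVal μ φ' γ' → MuEquiv μ φ φ') := by
  obtain ⟨w, rfl⟩ : ∃ w : AddValuation K[X] (WithTop Λ), ⇑w = μ := ⟨hμ.toAddValuation, rfl⟩
  have key := augVal_eq_augVal_iff hφ.1 hφ.2.1 hφ'.1 hφ'.2.1 hγ hγ'
  refine ⟨key, fun h => ?_⟩
  have hle := (key.mp h).2
  rw [w.map_sub_swap] at hle
  exact hγ.trans_le hle

/-- `[μ; φ, γ] = [μ; φ*, γ*]` if and only if `γ = γ*` and `μ(φ* - φ) ≥ γ`;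
in this case `φ ∼_μ φ*`. -/
theorem statement_4 {K : Type*} [Field K] {Λ : Type*} [AddCommGroup Λ] [LinearOrder Λ] [IsOrderedAddMonoid Λ]
    (v : FieldVal K Λ) (μ : Polynomial K → WithTop Λ) (hμ : IsValT v μ)
    (hin : IsInnerNode μ) (φ φ' : Polynomial K) (hφ : IsKeyPol μ φ) (hφ' : IsKeyPol μ φ')
    (γ γ' : WithTop Λ) (hγ : μ φ < γ) (hγ' : μ φ' < γ') :
    (augVal μ φ γ = augVal μ φ' γ' ↔ γ = γ' ∧ γ ≤ μ (φ' - φ)) ∧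
    (augVal μ φ γ = augVal μ φ' γ' → MuEquiv μ φ φ') :=
  statement_4_general v μ hμ φ φ' hφ hφ' γ γ' hγ hγ'
end
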